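/- arXiv:2402.19199 — 2 statements merged into one kernel-verified Lean document; each statement's English description precedes it below -/
import Mathlib

section
/- The inference system ReC→ = Sup ∪ {Rw→} admits equational derivability (ED): for every set of equations 𝒞, every equation l ≃ r, every substitution θ and every clause D[lθ], if D[lθ] is derivable (with some position annotation) from 𝒞 in ReC→, then D[lθ ↦ rθ] is derivable (with some position annotation) from 𝒞 ∪ {l ≃ r} in ReC→. -/
namespace RewInd

/-- First-order terms over variables `V` and function symbols `F`. -/
inductive Trm (V F : Type) : Type
  | var : V → Trm V F
  | app : F → List (Trm V F) → Trm V F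

variable {V F : Type}

/-- A substitution maps variables to terms. -/
abbrev Subst (V F : Type) := V → Trm V F

namespace Trm

/-- Apply a substitution homomorphically to a term. -/
def subst (θ : Subst V F) : Trm V F → Trm V F
  | var v => θ v
  | app f ts => app f (ts.attach.map fun t => subst θ t.1)
  decreasing_by
    have := List.sizeOf_lt_of_mem t.2
    simp only [Trm.app.sizeOf_spec]
    omega

/-- A term is ground if it contains no variables. -/
inductive Ground : Trm V F → Prop
  | app {f : F} {ts : List (Trm V F)} : (∀ t ∈ ts, Ground t) → Ground (app f ts)

/-- Whether a term is a variable. -/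
def isVar : Trm V F → Prop
  | var _ => True
  | app _ _ => False

/-- The multiset of variable occurrences of a term. -/
def varsM : Trm V F → Multiset V
  | var v => {v}
  | app _ ts => (ts.attach.map fun t => varsM t.1).sum
  decreasing_by
    have := List.sizeOf_lt_of_mem t.2
    simp only [Trm.app.sizeOf_spec]
    omega

end Trm

/-- Composition of substitutions: apply `θ` first, then `η`. -/
def Subst.comp (θ η : Subst V F) : Subst V F := fun v => (θ v).subst η

/-- The substitution replacing only the variable `x` by the term `t`. -/
def Subst.single [DecidableEq V] (x : V) (t : Trm V F) : Subst V F :=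
  fun v => if v = x then t else Trm.var v

/-- Positions: finite sequences of argument indices addressing subterm occurrences. -/
abbrev Pos := List ℕ

/-- `PosLeft p q` (`p <ₗ q`): position `p` is to the left of position `q`. -/
def PosLeft (p q : Pos) : Prop :=
  ∃ (r : Pos) (i j : ℕ) (p' q' : Pos), i < j ∧ p = r ++ i :: p' ∧ q = r ++ j :: q'

namespace Trm

/-- `SubtermAt t p s`: the term `t` has the subterm `s` at position `p`. -/
inductive SubtermAt : Trm V F → Pos → Trm V F → Prop
  | here (t : Trm V F) : SubtermAt t [] t
  | app {f : F} {ts : List (Trm V F)} {i : ℕ} {t s : Trm V F} {p : Pos} :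
      ts[i]? = some t → SubtermAt t p s → SubtermAt (app f ts) (i :: p) s

/-- `s` is a subterm of `t` (`s ⊴ t`). -/
def Subterm (s t : Trm V F) : Prop := ∃ p, SubtermAt t p s

/-- `s` is a strict subterm of `t` (`s ◁ t`). -/
def StrictSubterm (s t : Trm V F) : Prop := ∃ p, p ≠ [] ∧ SubtermAt t p s

/-- `ReplP a b p s t`: the term `s` has an occurrence of `a` at position `p`, and `t` is
the result of replacing this occurrence by `b`. -/
inductive ReplP (a b : Trm V F) : Pos → Trm V F → Trm V F → Prop
  | here : ReplP a b [] a b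
  | app {f : F} {ts : List (Trm V F)} {i : ℕ} {t t' : Trm V F} {p : Pos} :
      ts[i]? = some t → ReplP a b p t t' →
      ReplP a b (i :: p) (app f ts) (app f (ts.set i t'))

/-- `t` is obtained from `s` by replacing one occurrence of `a` by `b`. -/
def Repl (a b s t : Trm V F) : Prop := ∃ p, ReplP a b p s t

end Trm

/-- Literals: equations `s ≃ t` and disequations `s ≄ t`. -/
inductive Lit (V F : Type) : Type
  | pos : Trm V F → Trm V F → Lit V F
  | neg : Trm V F → Trm V F → Lit V F

namespace Lit

def subst (θ : Subst V F) : Lit V F → Lit V F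
  | pos s t => pos (s.subst θ) (t.subst θ)
  | neg s t => neg (s.subst θ) (t.subst θ)

/-- The complement of a literal. -/
def compl : Lit V F → Lit V F
  | pos s t => neg s t
  | neg s t => pos s t

def Ground : Lit V F → Prop
  | pos s t => s.Ground ∧ t.Ground
  | neg s t => s.Ground ∧ t.Ground

def varsM : Lit V F → Multiset V
  | pos s t => s.varsM + t.varsM
  | neg s t => s.varsM + t.varsM

/-- The literal with polarity `b` (`true` = equation, `false` = disequation) and sides `s`, `t`. -/
def sided (b : Bool) (s t : Trm V F) : Lit V F := if b then pos s t else neg s t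

/-- `L` is the literal `s ⋈ t` of polarity `b`, where (dis)equations are symmetric in their
two sides. -/
def HasShape (L : Lit V F) (b : Bool) (s t : Trm V F) : Prop :=
  L = sided b s t ∨ L = sided b t s

/-- Replacement of one occurrence of `a` by `b` at a position inside a literal:
position `0` addresses the left-hand side, position `1` the right-hand side. -/
inductive ReplP (a b : Trm V F) : Pos → Lit V F → Lit V F → Prop
  | posL {s s' t : Trm V F} {p : Pos} :
      Trm.ReplP a b p s s' → ReplP a b (0 :: p) (pos s t) (pos s' t)
  | posR {s t t' : Trm V F} {p : Pos} :
      Trm.ReplP a b p t t' → ReplP a b (1 :: p) (pos s t) (pos s t')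
  | negL {s s' t : Trm V F} {p : Pos} :
      Trm.ReplP a b p s s' → ReplP a b (0 :: p) (neg s t) (neg s' t)
  | negR {s t t' : Trm V F} {p : Pos} :
      Trm.ReplP a b p t t' → ReplP a b (1 :: p) (neg s t) (neg s t')

def Repl (a b : Trm V F) (L L' : Lit V F) : Prop := ∃ p, ReplP a b p L L'

/-- `SubtermAt L p u`: the literal `L` has the subterm `u` at position `p`. -/
inductive SubtermAt : Lit V F → Pos → Trm V F → Prop
  | posL {s t u : Trm V F} {p : Pos} : Trm.SubtermAt s p u → SubtermAt (pos s t) (0 :: p) u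
  | posR {s t u : Trm V F} {p : Pos} : Trm.SubtermAt t p u → SubtermAt (pos s t) (1 :: p) u
  | negL {s t u : Trm V F} {p : Pos} : Trm.SubtermAt s p u → SubtermAt (neg s t) (0 :: p) u
  | negR {s t u : Trm V F} {p : Pos} : Trm.SubtermAt t p u → SubtermAt (neg s t) (1 :: p) u

end Lit

/-- Clauses are finite multisets of literals. -/
abbrev Clause (V F : Type) := Multiset (Lit V F)

namespace Clause

def subst (θ : Subst V F) (C : Clause V F) : Clause V F := C.map (Lit.subst θ)

def Ground (C : Clause V F) : Prop := ∀ L ∈ C, L.Ground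

def varsM (C : Clause V F) : Multiset V := (C.map Lit.varsM).sum

/-- `ReplP a b q C D`: the clause `D` is obtained from `C` by replacing one occurrence
of `a` at clause position `q` by `b` (the head of `q` addresses a literal of the clause). -/
def ReplP (a b : Trm V F) (q : Pos) (C D : Clause V F) : Prop :=
  ∃ (ls : List (Lit V F)) (i : ℕ) (L L' : Lit V F) (p : Pos),
    q = i :: p ∧ C = (ls : Multiset (Lit V F)) ∧ ls[i]? = some L ∧
    Lit.ReplP a b p L L' ∧ D = ((ls.set i L' : List (Lit V F)) : Multiset (Lit V F))

/-- `D` is obtained from `C` by replacing one occurrence of `a` by `b`. -/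
def Repl (a b : Trm V F) (C D : Clause V F) : Prop := ∃ q, ReplP a b q C D

end Clause

/-- The unit clause `l ≃ r`. -/
def eqn (l r : Trm V F) : Clause V F := {Lit.pos l r}

/-- `E` is the equation `l ≃ r`; equations are symmetric in their sides. -/
def IsEqnOf (E : Clause V F) (l r : Trm V F) : Prop := E = eqn l r ∨ E = eqn r l

/-- `E` is a (unit) equation. -/
def IsEqn (E : Clause V F) : Prop := ∃ l r, E = eqn l r

/-- The (Dershowitz–Manna) multiset extension of an ordering: `N` is greater than `M`. -/
def MulExt {α : Type*} (r : α → α → Prop) (N M : Multiset α) : Prop :=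
  ∃ X Y Z, N = Z + Y ∧ M = Z + X ∧ Y ≠ 0 ∧ ∀ x ∈ X, ∃ y ∈ Y, r y x

/-- Encoding of a literal as a multiset of terms, for the ordering extension. -/
def Lit.ms : Lit V F → Multiset (Trm V F)
  | .pos s t => {s, t}
  | .neg s t => {s, s, t, t}

/-- Extension of the term ordering to literals. -/
def LitGT (succ : Trm V F → Trm V F → Prop) (L M : Lit V F) : Prop := MulExt succ L.ms M.ms

/-- Extension of the term ordering to clauses. -/
def ClauseGT (succ : Trm V F → Trm V F → Prop) (C D : Clause V F) : Prop :=
  MulExt (LitGT succ) C D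

/-- `a ⪰ b`. -/
def SuccEq (succ : Trm V F → Trm V F → Prop) (a b : Trm V F) : Prop := succ a b ∨ a = b

/-- `succ` is a simplification ordering (total on ground terms). -/
structure SimpOrd (succ : Trm V F → Trm V F → Prop) : Prop where
  trans : ∀ {a b c : Trm V F}, succ a b → succ b c → succ a c
  irrefl : ∀ a : Trm V F, ¬ succ a a
  wf : WellFounded fun a b : Trm V F => succ b a
  total_ground : ∀ {s t : Trm V F}, s.Ground → t.Ground → succ s t ∨ s = t ∨ succ t s
  subst_mono : ∀ {l r : Trm V F} (θ : Subst V F), succ l r → succ (l.subst θ) (r.subst θ)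
  ctx_mono : ∀ {l r s s' : Trm V F} {p : Pos}, succ l r → Trm.ReplP l r p s s' → succ s s'

/-- `θ` is a unifier of `s` and `t`. -/
def IsUnifier (θ : Subst V F) (s t : Trm V F) : Prop := s.subst θ = t.subst θ

/-- `θ` is a most general unifier of `s` and `t`. -/
def IsMGU (θ : Subst V F) (s t : Trm V F) : Prop :=
  IsUnifier θ s t ∧ ∀ η, IsUnifier η s t → ∃ μ, ∀ v, η v = (θ v).subst μ

/-- The superposition calculus `Sup` (rules Sup, EqRes, EqFac). -/
inductive SupInf (succ : Trm V F → Trm V F → Prop) : List (Clause V F) → Clause V F → Prop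
  | sup {C D C' D' : Clause V F} {L M : Lit V F} {b : Bool} {s t u l r s' : Trm V F}
      {p : Pos} {θ : Subst V F} :
      C = L ::ₘ C' → L.HasShape b s t →
      D = M ::ₘ D' → M.HasShape true l r →
      ¬ u.isVar → Trm.ReplP u r p s s' → IsMGU θ l u →
      ¬ SuccEq succ (r.subst θ) (l.subst θ) → ¬ SuccEq succ (t.subst θ) (s.subst θ) →
      SupInf succ [C, D] (Clause.subst θ (Lit.sided b s' t ::ₘ (C' + D')))
  | eqres {C C' : Clause V F} {L : Lit V F} {s t : Trm V F} {θ : Subst V F} :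
      C = L ::ₘ C' → L.HasShape false s t → IsMGU θ s t →
      SupInf succ [C] (Clause.subst θ C')
  | eqfac {C C' : Clause V F} {L M : Lit V F} {s t u w : Trm V F} {θ : Subst V F} :
      C = L ::ₘ M ::ₘ C' → L.HasShape true s t → M.HasShape true u w → IsMGU θ s u →
      ¬ SuccEq succ (t.subst θ) (s.subst θ) → ¬ SuccEq succ (w.subst θ) (t.subst θ) →
      SupInf succ [C] (Clause.subst θ (Lit.sided true s t ::ₘ Lit.sided false t w ::ₘ C'))

/-- The unconstrained rewriting rule (Rw): from `C[lθ]` and `l ≃ r` derive `C[lθ ↦ rθ]`. -/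
def RwInf : List (Clause V F) → Clause V F → Prop := fun Ps D =>
  ∃ (C E : Clause V F) (l r : Trm V F) (θ : Subst V F),
    Ps = [C, E] ∧ IsEqnOf E l r ∧ Clause.Repl (l.subst θ) (r.subst θ) C D

/-- Derivability of a clause from a set of clauses in an inference system given as a
relation between lists of premises and conclusions. -/
inductive Derives {α : Type*} (I : List α → α → Prop) (S : Set α) : α → Prop
  | ax {C} : C ∈ S → Derives I S C
  | inf {Ps C} : (∀ P ∈ Ps, Derives I S P) → I Ps C → Derives I S C

/-- An inference system admits equational derivability (ED). -/
def AdmitsED (I : List (Clause V F) → Clause V F → Prop) : Prop :=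
  ∀ S : Set (Clause V F), (∀ C ∈ S, IsEqn C) →
    ∀ (l r : Trm V F) (θ : Subst V F) (D D' : Clause V F),
      Derives I S D → Clause.Repl (l.subst θ) (r.subst θ) D D' →
      Derives I (S ∪ {eqn l r}) D'

/-- Annotate every clause of a set with the empty position `ε`. -/
def annEps (S : Set (Clause V F)) : Set (Clause V F × Pos) :=
  {P | P.1 ∈ S ∧ P.2 = ([] : Pos)}

/-- Lift an inference system to position-annotated clauses: the conclusion is
annotated with the empty position `ε`. -/
def LiftEps (I : List (Clause V F) → Clause V F → Prop) :
    List (Clause V F × Pos) → (Clause V F × Pos) → Prop := fun Ps C =>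
  I (Ps.map Prod.fst) C.1 ∧ C.2 = ([] : Pos)

/-- The rule Rw→: from `C[lθ]_q` with position annotation `p` and equation `l ≃ r`,
provided `q ≮ₗ p`, derive `C[lθ ↦ rθ]` with position annotation `q`. -/
def RwArrInf : List (Clause V F × Pos) → (Clause V F × Pos) → Prop := fun Ps D =>
  ∃ (C E : Clause V F) (p pE : Pos) (l r : Trm V F) (θ : Subst V F) (q : Pos),
    Ps = [(C, p), (E, pE)] ∧ IsEqnOf E l r ∧ ¬ PosLeft q p ∧
    Clause.ReplP (l.subst θ) (r.subst θ) q C D.1 ∧ D.2 = q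

/-- The calculus ReC→ = Sup ∪ {Rw→}. -/
def ReCarr (succ : Trm V F → Trm V F → Prop) :
    List (Clause V F × Pos) → (Clause V F × Pos) → Prop := fun Ps C =>
  LiftEps (SupInf succ) Ps C ∨ RwArrInf Ps C

/-! A rewrite of `D[lθ]` by `l ≃ r` is inserted into a ReC→-derivation of `D[lθ]` directly
after its last step whenever that is allowed. The only obstruction is a final Rw→ step at
some position `j :: p₁` with the new position `p₂` to the left of `p₁` in the same literal.
Since the two rewrites are then at parallel positions they commute, so the new rewrite is
pushed, by induction, into the premise of that step, and the step is replayed afterwards.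
Replaying is allowed because the pushed-down rewrite always ends with an annotation that
admits every position to the right of `p₂` which the old one admitted. -/

theorem not_posLeft_nil_right (q : Pos) : ¬ PosLeft q [] := by
  rintro ⟨r, i, j, p', q', -, -, hq⟩
  simp at hq

theorem not_posLeft_nil_left (q : Pos) : ¬ PosLeft [] q := by
  rintro ⟨r, i, j, p', q', -, hp, -⟩
  simp at hp

theorem posLeft_cons_cons_iff {i j : ℕ} {p q : Pos} :
    PosLeft (i :: p) (j :: q) ↔ i < j ∨ (i = j ∧ PosLeft p q) := by
  constructor
  · rintro ⟨_ | ⟨c, r⟩, a, b, p', q', hab, hp, hq⟩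
    · simp only [List.nil_append, List.cons.injEq] at hp hq
      exact Or.inl (by omega)
    · simp only [List.cons_append, List.cons.injEq] at hp hq
      exact Or.inr ⟨hp.1.trans hq.1.symm, r, a, b, p', q', hab, hp.2, hq.2⟩
  · rintro (h | ⟨rfl, r, a, b, p', q', hab, rfl, rfl⟩)
    · exact ⟨[], i, j, p, q, h, rfl, rfl⟩
    · exact ⟨i :: r, a, b, p', q', hab, rfl, rfl⟩

theorem PosLeft.asymm : ∀ {p q : Pos}, PosLeft p q → ¬ PosLeft q p
  | [], _, h, _ => not_posLeft_nil_left _ h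
  | _ :: _, [], h, _ => not_posLeft_nil_right _ h
  | _ :: _, _ :: _, h, h' => by
    rcases posLeft_cons_cons_iff.1 h with hij | ⟨rfl, hpq⟩ <;>
      rcases posLeft_cons_cons_iff.1 h' with hji | ⟨_, hqp⟩
    all_goals first | omega | exact hpq.asymm hqp

theorem posLeft_headD_cons_iff {p q : Pos} : PosLeft (p.headD 0 :: q) p ↔ PosLeft q p.tail := by
  cases p with
  | nil => simp [not_posLeft_nil_right]
  | cons j p => simp [posLeft_cons_cons_iff]

def AdmitsRightOf (p₂ p p' : Pos) : Prop :=
  ∀ j t, ¬ PosLeft (j :: t) p → PosLeft p₂ t → ¬ PosLeft (j :: t) p'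

theorem AdmitsRightOf.refl (p₂ p : Pos) : AdmitsRightOf p₂ p p := fun _ _ h _ => h

theorem admitsRightOf_headD_cons (p₂ p : Pos) : AdmitsRightOf p₂ p (p.headD 0 :: p₂) := by
  intro j t hp ht hlt
  rcases posLeft_cons_cons_iff.1 hlt with hj | ⟨-, htp⟩
  · cases p with
    | nil => exact Nat.not_lt_zero _ hj
    | cons k p => exact hp (posLeft_cons_cons_iff.2 (Or.inl hj))
  · exact ht.asymm htp

namespace Trm

theorem ReplP.comm_of_posLeft {x y a b : Trm V F} {q₁ q₂ : Pos} {s s₁ s₂ : Trm V F}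
    (h₁ : ReplP x y q₁ s s₁) (h₂ : ReplP a b q₂ s₁ s₂) (hlt : PosLeft q₂ q₁) :
    ∃ s', ReplP a b q₂ s s' ∧ ReplP x y q₁ s' s₂ := by
  induction h₁ generalizing q₂ s₂ with
  | here => exact absurd hlt (not_posLeft_nil_right _)
  | @app f ts i t t' p hti _ ih =>
    cases h₂ with
    | here => exact absurd hlt (not_posLeft_nil_left _)
    | @app _ _ k u u' p' hku hu =>
      have hi : i < ts.length := (List.getElem?_eq_some_iff.1 hti).1
      rcases posLeft_cons_cons_iff.1 hlt with hki | ⟨rfl, hp⟩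
      · rw [List.getElem?_set_ne hki.ne'] at hku
        refine ⟨_, .app hku hu, ?_⟩
        rw [List.set_comm _ _ hki.ne']
        exact .app (by rwa [List.getElem?_set_ne hki.ne]) ‹_›
      · rw [List.getElem?_set_self hi, Option.some.injEq] at hku
        subst hku
        obtain ⟨s', hs', hs'u'⟩ := ih hu hp
        refine ⟨_, .app hti hs', ?_⟩
        simpa only [List.set_set] using
          ReplP.app (f := f) (List.getElem?_set_self (by simpa using hi)) hs'u'

end Trm

namespace Lit

theorem ReplP.comm_of_posLeft {x y a b : Trm V F} {q₁ q₂ : Pos} {L L₁ L₂ : Lit V F}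
    (h₁ : ReplP x y q₁ L L₁) (h₂ : ReplP a b q₂ L₁ L₂) (hlt : PosLeft q₂ q₁) :
    ∃ L', ReplP a b q₂ L L' ∧ ReplP x y q₁ L' L₂ := by
  cases h₁ <;> cases h₂ <;> rw [posLeft_cons_cons_iff] at hlt
  all_goals first
    | omega
    | exact ⟨_, .posL ‹_›, .posR ‹_›⟩
    | exact ⟨_, .negL ‹_›, .negR ‹_›⟩
    | skip
  all_goals
    obtain ⟨t, ht, ht'⟩ :=
      Trm.ReplP.comm_of_posLeft ‹_› ‹_› (hlt.resolve_left (by omega)).2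
  exacts [⟨_, .posL ht, .posL ht'⟩, ⟨_, .posR ht, .posR ht'⟩,
    ⟨_, .negL ht, .negL ht'⟩, ⟨_, .negR ht, .negR ht'⟩]

end Lit

namespace Clause

theorem ReplP.exists_cons {a b : Trm V F} {q : Pos} {C D : Clause V F} (h : ReplP a b q C D) :
    ∃ i p, q = i :: p := by
  obtain ⟨-, i, -, -, p, rfl, -⟩ := h
  exact ⟨i, p, rfl⟩

theorem replP_cons_iff {a b : Trm V F} {i : ℕ} {p : Pos} {C D : Clause V F} :
    ReplP a b (i :: p) C D ↔ ∃ M M' C₀, i ≤ Multiset.card C₀ ∧ C = M ::ₘ C₀ ∧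
      D = M' ::ₘ C₀ ∧ Lit.ReplP a b p M M' := by
  constructor
  · rintro ⟨ls, i, M, M', p, hq, rfl, hM, hMM', rfl⟩
    obtain ⟨rfl, rfl⟩ := List.cons.inj hq
    obtain ⟨hi, rfl⟩ := List.getElem?_eq_some_iff.1 hM
    refine ⟨_, M', ls.eraseIdx i, by simp [List.length_eraseIdx_of_lt hi]; omega,
      Multiset.coe_eq_coe.2 (List.getElem_cons_eraseIdx_perm hi).symm,
      Multiset.coe_eq_coe.2 (List.set_perm_cons_eraseIdx hi M'), hMM'⟩
  · rintro ⟨M, M', C₀, hi, rfl, rfl, hMM'⟩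
    have hi' : i ≤ C₀.toList.length := by simpa using hi
    set ls := C₀.toList.insertIdx i M
    have hls : i < ls.length := by simp [ls, List.length_insertIdx_of_le_length hi']; omega
    have hC₀ : ls.eraseIdx i = C₀.toList := List.eraseIdx_insertIdx_self _
    have hM : ls[i]? = some M := by simp [ls, List.getElem?_insertIdx_self, hi]
    refine ⟨ls, i, M, M', p, rfl, ?_, hM, hMM', ?_⟩
    · rw [← Multiset.coe_toList C₀, Multiset.cons_coe, Multiset.coe_eq_coe]
      exact (List.perm_insertIdx M _ hi').symm
    · rw [Multiset.coe_eq_coe.2 (List.set_perm_cons_eraseIdx hls M'), hC₀, ← Multiset.cons_coe,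
        Multiset.coe_toList]

theorem ReplP.head_lt_card {a b : Trm V F} {i : ℕ} {p : Pos} {C D : Clause V F}
    (h : ReplP a b (i :: p) C D) : i < Multiset.card D := by
  obtain ⟨-, -, C₀, hi, -, rfl, -⟩ := replP_cons_iff.1 h
  simpa using Nat.lt_succ_of_le hi

theorem ReplP.comm_of_posLeft {x y a b : Trm V F} {j : ℕ} {p₁ p₂ : Pos}
    {C D D₀ : Clause V F} {M M' : Lit V F} (h₁ : ReplP x y (j :: p₁) C D)
    (hD : D = M ::ₘ D₀) (h₂ : Lit.ReplP a b p₂ M M') (hlt : PosLeft p₂ p₁) :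
    ∃ N N' C₁, C = N ::ₘ C₁ ∧ Lit.ReplP a b p₂ N N' ∧
      ReplP x y (j :: p₁) (N' ::ₘ C₁) (M' ::ₘ D₀) := by
  obtain ⟨L, L₁, C₀, hj, rfl, rfl, hL⟩ := replP_cons_iff.1 h₁
  rcases Multiset.cons_eq_cons.1 hD with ⟨rfl, rfl⟩ | ⟨-, cs, rfl, rfl⟩
  · obtain ⟨L', hL', hL'M'⟩ := hL.comm_of_posLeft h₂ hlt
    exact ⟨L, L', C₀, rfl, hL', replP_cons_iff.2 ⟨L', M', C₀, hj, rfl, rfl, hL'M'⟩⟩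
  · refine ⟨M, M', L ::ₘ cs, Multiset.cons_swap _ _ _, h₂, replP_cons_iff.2
      ⟨L, L₁, M' ::ₘ cs, by simpa using hj, Multiset.cons_swap _ _ _,
        Multiset.cons_swap _ _ _, hL⟩⟩

end Clause

theorem Derives.mono {α : Type*} {I : List α → α → Prop} {S T : Set α} (hST : S ⊆ T)
    {C : α} (h : Derives I S C) : Derives I T C := by
  induction h with
  | ax h => exact .ax (hST h)
  | inf _ hI ih => exact .inf ih hI

theorem annEps_mono {S T : Set (Clause V F)} (h : S ⊆ T) : annEps S ⊆ annEps T :=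
  fun _ hP => ⟨h hP.1, hP.2⟩

section Insertion

variable {succ : Trm V F → Trm V F → Prop} {B : Set (Clause V F × Pos)} {E : Clause V F}
  {pE : Pos} {l r : Trm V F} {θ : Subst V F}

theorem Derives.rwArr {C D : Clause V F} {p q : Pos} (hC : Derives (ReCarr succ) B (C, p))
    (hE : Derives (ReCarr succ) B (E, pE)) (hlr : IsEqnOf E l r) (hq : ¬ PosLeft q p)
    (hCD : Clause.ReplP (l.subst θ) (r.subst θ) q C D) : Derives (ReCarr succ) B (D, q) := by
  refine .inf (Ps := [(C, p), (E, pE)]) ?_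
    (Or.inr ⟨C, E, p, pE, l, r, θ, q, rfl, hlr, hq, hCD, rfl⟩)
  simp only [List.mem_cons, List.not_mem_nil, or_false]
  rintro _ (rfl | rfl)
  exacts [hC, hE]

theorem Derives.exists_rewrite_at_headD {M M' : Lit V F} {D₀ : Clause V F} {p p₂ : Pos}
    (hD : Derives (ReCarr succ) B (M ::ₘ D₀, p)) (hE : Derives (ReCarr succ) B (E, pE))
    (hlr : IsEqnOf E l r) (hM : Lit.ReplP (l.subst θ) (r.subst θ) p₂ M M')
    (hhead : p.headD 0 ≤ Multiset.card D₀) (htail : ¬ PosLeft p₂ p.tail) :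
    ∃ p', Derives (ReCarr succ) B (M' ::ₘ D₀, p') ∧ AdmitsRightOf p₂ p p' :=
  ⟨_, hD.rwArr hE hlr (by rwa [posLeft_headD_cons_iff])
    (Clause.replP_cons_iff.2 ⟨M, M', D₀, hhead, rfl, rfl, hM⟩),
    admitsRightOf_headD_cons p₂ p⟩

theorem Derives.exists_rewrite {A : Set (Clause V F × Pos)} {D : Clause V F} {p : Pos}
    (hD : Derives (ReCarr succ) A (D, p)) (hA : ∀ P ∈ A, P.2 = []) (hAB : A ⊆ B)
    (hE : Derives (ReCarr succ) B (E, pE)) (hlr : IsEqnOf E l r)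
    {M M' : Lit V F} {D₀ : Clause V F} {p₂ : Pos} (hDM : D = M ::ₘ D₀)
    (hM : Lit.ReplP (l.subst θ) (r.subst θ) p₂ M M') :
    ∃ p', Derives (ReCarr succ) B (M' ::ₘ D₀, p') ∧ AdmitsRightOf p₂ p p' := by
  generalize hDp : (D, p) = Dp at hD
  induction hD generalizing D p M D₀ p₂ M' with
  | ax hmem =>
    subst hDp hDM
    obtain rfl : p = [] := hA _ hmem
    exact (Derives.ax (hAB hmem)).exists_rewrite_at_headD hE hlr hM (by simp)
      (not_posLeft_nil_right _)
  | inf hPs hI ih =>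
    subst hDp hDM
    have hDB := (Derives.inf hPs hI).mono hAB
    rcases hI with ⟨-, hp⟩ |
      ⟨C, E₀, pC, pE₀, l₀, r₀, θ₀, q, rfl, hlr₀, hq, hCD, rfl⟩
    · obtain rfl : p = [] := hp
      exact hDB.exists_rewrite_at_headD hE hlr hM (by simp) (not_posLeft_nil_right _)
    obtain ⟨j, p₁, rfl⟩ := hCD.exists_cons
    by_cases hst : PosLeft p₂ p₁
    · obtain ⟨N, N', C₁, rfl, hN, hrep⟩ := hCD.comm_of_posLeft rfl hM hst
      obtain ⟨p', hder, hadm⟩ := ih (N ::ₘ C₁, pC) (by simp) rfl hN rfl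
      have hE₀ := (hPs (E₀, pE₀) (by simp)).mono hAB
      exact ⟨_, hder.rwArr hE₀ hlr₀ (hadm j p₁ hq hst) hrep, AdmitsRightOf.refl _ _⟩
    · have hj := hCD.head_lt_card
      exact hDB.exists_rewrite_at_headD hE hlr hM (by simp at hj ⊢; omega) hst

end Insertion

theorem ReCarr_admitsED_general {V F : Type} (succ : Trm V F → Trm V F → Prop) :
    ∀ S : Set (Clause V F), (∀ C ∈ S, IsEqn C) →
      ∀ (l r : Trm V F) (θ : Subst V F) (D D' : Clause V F) (p : Pos),
        Derives (ReCarr succ) (annEps S) (D, p) →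
        Clause.Repl (l.subst θ) (r.subst θ) D D' →
        ∃ p' : Pos, Derives (ReCarr succ) (annEps (S ∪ {eqn l r})) (D', p') := by
  intro S _ l r θ D D' p hD ⟨q, hq⟩
  obtain ⟨i, p₂, rfl⟩ := hq.exists_cons
  obtain ⟨M, M', D₀, -, rfl, rfl, hM⟩ := Clause.replP_cons_iff.1 hq
  have hlr : (eqn l r, []) ∈ annEps (S ∪ {eqn l r}) := ⟨Or.inr rfl, rfl⟩
  obtain ⟨p', hder, -⟩ := hD.exists_rewrite (fun _ hP => hP.2)
    (annEps_mono Set.subset_union_left) (.ax hlr) (Or.inl rfl) rfl hM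
  exact ⟨p', hder⟩

/-- The inference system ReC→ = Sup ∪ {Rw→} admits equational
derivability (ED): for every set of equations `𝒞` (annotated `ε`), equation `l ≃ r`,
substitution `θ` and clause `D[lθ]` derivable with some position annotation from `𝒞`
in ReC→, the clause `D[lθ ↦ rθ]` is derivable with some position annotation from
`𝒞 ∪ {l ≃ r}` in ReC→. -/
theorem ReCarr_admitsED {V F : Type} (succ : Trm V F → Trm V F → Prop)
    (hsucc : SimpOrd succ) :
    ∀ S : Set (Clause V F), (∀ C ∈ S, IsEqn C) →
      ∀ (l r : Trm V F) (θ : Subst V F) (D D' : Clause V F) (p : Pos),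
        Derives (ReCarr succ) (annEps S) (D, p) →
        Clause.Repl (l.subst θ) (r.subst θ) D D' →
        ∃ p' : Pos, Derives (ReCarr succ) (annEps (S ∪ {eqn l r})) (D', p') :=
  ReCarr_admitsED_general succ

end RewInd
end

section
/- Linearization of rewrite derivations: Let 𝒞 be a set of clauses and D a clause. If D is derivable from 𝒞 using only Rw inferences (where the equations used for rewriting may themselves have been derived from 𝒞 by Rw inferences), then there is a derivation of D of linear form: a sequence of clauses C₁, C₂, …, Cₙ, D such that C₁ ∈ 𝒞 and each clause in the sequence after C₁ is obtained from its predecessor by a single Rw inference whose rewriting equation l_i ≃ r_i belongs to 𝒞. -/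
namespace RewInd

variable {V F : Type}

/-- One Rw rewriting step whose rewriting equation belongs to `𝒞`. -/
def RwStepWith (𝒞 : Set (Clause V F)) (X Y : Clause V F) : Prop :=
  ∃ (E : Clause V F) (l r : Trm V F) (θ : Subst V F),
    E ∈ 𝒞 ∧ IsEqnOf E l r ∧ Clause.Repl (l.subst θ) (r.subst θ) X Y

/-!
Induction on the derivation. The only nontrivial case is a rewrite with an equation `E` that
was itself derived: by induction `E` arises from some `E₁ ∈ 𝒞` by a chain of rewrites with
equations of `𝒞`, and a rewrite with `E` can be simulated along that chain. If `E` came from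
`s ≃ v` by rewriting `s` to `u` with `l ≃ r`, then a rewrite of `uθ'` to `vθ'` is replaced by
rewriting back to `sθ'` with `r ≃ l` and then rewriting with `s ≃ v`; if the right side was
rewritten, one rewrites forward with `l ≃ r` afterwards instead.
-/

namespace Trm

theorem subst_app (σ : Subst V F) (f : F) (ts : List (Trm V F)) :
    (app f ts).subst σ = app f (ts.map (·.subst σ)) := by
  rw [subst]
  congr 1
  exact List.attach_map_val

theorem subst_subst (θ η : Subst V F) : ∀ t : Trm V F, (t.subst θ).subst η = t.subst (θ.comp η)
  | .var v => by simp [subst, Subst.comp]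
  | .app f ts => by
      rw [subst_app, subst_app, subst_app, List.map_map]
      congr 1
      refine List.map_congr_left fun t ht => ?_
      have := List.sizeOf_lt_of_mem ht
      exact subst_subst θ η t
  termination_by t => sizeOf t
  decreasing_by simp only [app.sizeOf_spec]; omega

namespace ReplP

variable {a b : Trm V F} {p : Pos} {s t : Trm V F}

theorem subst (σ : Subst V F) (h : ReplP a b p s t) :
    ReplP (a.subst σ) (b.subst σ) p (s.subst σ) (t.subst σ) := by
  induction h with
  | here => exact .here
  | app hget _ ih =>
      rw [subst_app, subst_app, List.map_set]
      exact .app (by rw [List.getElem?_map, hget]; rfl) ih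

theorem symm (h : ReplP a b p s t) : ReplP b a p t s := by
  induction h with
  | here => exact .here
  | @app f ts i t t' p hget _ ih =>
      obtain ⟨hi, rfl⟩ := List.getElem?_eq_some_iff.mp hget
      have := ReplP.app (f := f) (List.getElem?_set_self hi) ih
      rwa [List.set_set, List.set_getElem_self] at this

theorem factor (h : ReplP a b p s t) (w : Trm V F) :
    ∃ s₀, ReplP a w p s s₀ ∧ ReplP w b p s₀ t := by
  induction h with
  | here => exact ⟨w, .here, .here⟩
  | @app f ts i t t' p hget _ ih =>
      obtain ⟨t₀, h₁, h₂⟩ := ih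
      obtain ⟨hi, -⟩ := List.getElem?_eq_some_iff.mp hget
      refine ⟨Trm.app f (ts.set i t₀), .app hget h₁, ?_⟩
      have := ReplP.app (f := f) (List.getElem?_set_self hi) h₂
      rwa [List.set_set] at this

theorem nest {x y : Trm V F} {q : Pos} (hxy : ReplP x y q a b) (h : ReplP a b p s t) :
    ReplP x y (p ++ q) s t := by
  induction h with
  | here => exact hxy
  | app hget _ ih => exact .app hget ih

end ReplP

end Trm

namespace Lit.ReplP

variable {a b : Trm V F} {p : Pos} {L L' : Lit V F}

theorem factor (h : ReplP a b p L L') (w : Trm V F) :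
    ∃ L₀, ReplP a w p L L₀ ∧ ReplP w b p L₀ L' := by
  cases h with
  | posL h => obtain ⟨_, h₁, h₂⟩ := h.factor w; exact ⟨_, .posL h₁, .posL h₂⟩
  | posR h => obtain ⟨_, h₁, h₂⟩ := h.factor w; exact ⟨_, .posR h₁, .posR h₂⟩
  | negL h => obtain ⟨_, h₁, h₂⟩ := h.factor w; exact ⟨_, .negL h₁, .negL h₂⟩
  | negR h => obtain ⟨_, h₁, h₂⟩ := h.factor w; exact ⟨_, .negR h₁, .negR h₂⟩

theorem nest {x y : Trm V F} {q : Pos} (hxy : Trm.ReplP x y q a b) (h : ReplP a b p L L') :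
    ∃ p', ReplP x y p' L L' := by
  cases h with
  | posL h => exact ⟨_, .posL (hxy.nest h)⟩
  | posR h => exact ⟨_, .posR (hxy.nest h)⟩
  | negL h => exact ⟨_, .negL (hxy.nest h)⟩
  | negR h => exact ⟨_, .negR (hxy.nest h)⟩

theorem pos_inv {u v : Trm V F} (h : ReplP a b p L (.pos u v)) :
    (∃ s, Trm.Repl a b s u ∧ L = .pos s v) ∨ (∃ t, Trm.Repl a b t v ∧ L = .pos u t) := by
  cases h with
  | posL h => exact .inl ⟨_, ⟨_, h⟩, rfl⟩
  | posR h => exact .inr ⟨_, ⟨_, h⟩, rfl⟩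

end Lit.ReplP

namespace Clause.Repl

variable {a b : Trm V F} {C D : Clause V F}

theorem factor (h : Repl a b C D) (w : Trm V F) : ∃ C₀, Repl a w C C₀ ∧ Repl w b C₀ D := by
  obtain ⟨_, ls, i, L, L', p, rfl, rfl, hget, hlit, rfl⟩ := h
  obtain ⟨L₀, h₁, h₂⟩ := hlit.factor w
  obtain ⟨hi, -⟩ := List.getElem?_eq_some_iff.mp hget
  refine ⟨ls.set i L₀, ⟨_, ls, i, L, L₀, p, rfl, rfl, hget, h₁, rfl⟩,
    ⟨_, ls.set i L₀, i, L₀, L', p, rfl, rfl, List.getElem?_set_self hi, h₂, ?_⟩⟩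
  rw [List.set_set]

theorem nest {x y : Trm V F} {q : Pos} (hxy : Trm.ReplP x y q a b) (h : Repl a b C D) :
    Repl x y C D := by
  obtain ⟨_, ls, i, L, L', p, rfl, hC, hget, hlit, hD⟩ := h
  obtain ⟨p', hlit'⟩ := hlit.nest hxy
  exact ⟨i :: p', ls, i, L, L', p', rfl, hC, hget, hlit', hD⟩

theorem eq_singleton_inv {L' : Lit V F} (h : Repl a b C {L'}) :
    ∃ L p, C = {L} ∧ Lit.ReplP a b p L L' := by
  obtain ⟨_, ls, i, L, L'', p, rfl, rfl, hget, hlit, hD⟩ := h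
  have hset : ls.set i L'' = [L'] := Multiset.coe_eq_singleton.mp hD.symm
  obtain ⟨L₀, rfl⟩ : ∃ L₀, ls = [L₀] :=
    List.length_eq_one_iff.mp (by simpa using congrArg List.length hset)
  obtain ⟨hi, rfl⟩ := List.getElem?_eq_some_iff.mp hget
  obtain rfl : i = 0 := by simpa using hi
  obtain rfl : L'' = L' := by simpa using hset
  exact ⟨_, p, rfl, hlit⟩

theorem eqn_inv {u v : Trm V F} (h : Repl a b C (eqn u v)) :
    (∃ s, Trm.Repl a b s u ∧ C = eqn s v) ∨ (∃ t, Trm.Repl a b t v ∧ C = eqn u t) := by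
  obtain ⟨L, p, rfl, hlit⟩ := h.eq_singleton_inv
  rcases hlit.pos_inv with ⟨s, hs, rfl⟩ | ⟨t, ht, rfl⟩
  exacts [.inl ⟨s, hs, rfl⟩, .inr ⟨t, ht, rfl⟩]

theorem isEqnOf_inv {E : Clause V F} {u v : Trm V F} (h : Repl a b C E) (hE : IsEqnOf E u v) :
    (∃ s, Trm.Repl a b s u ∧ IsEqnOf C s v) ∨ (∃ t, Trm.Repl a b t v ∧ IsEqnOf C u t) := by
  rcases hE with rfl | rfl
  · rcases h.eqn_inv with ⟨s, hs, rfl⟩ | ⟨t, ht, rfl⟩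
    exacts [.inl ⟨s, hs, .inl rfl⟩, .inr ⟨t, ht, .inl rfl⟩]
  · rcases h.eqn_inv with ⟨t, ht, rfl⟩ | ⟨s, hs, rfl⟩
    exacts [.inr ⟨t, ht, .inr rfl⟩, .inl ⟨s, hs, .inr rfl⟩]

end Clause.Repl

theorem IsEqnOf.symm {E : Clause V F} {l r : Trm V F} (h : IsEqnOf E l r) : IsEqnOf E r l :=
  Or.symm h

def RwSimulatedBy (𝒞 : Set (Clause V F)) (E : Clause V F) : Prop :=
  ∀ ⦃u v : Trm V F⦄ ⦃θ : Subst V F⦄ ⦃C D : Clause V F⦄,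
    IsEqnOf E u v → Clause.Repl (u.subst θ) (v.subst θ) C D →
      Relation.ReflTransGen (RwStepWith 𝒞) C D

namespace RwSimulatedBy

variable {𝒞 : Set (Clause V F)} {E E' : Clause V F}

theorem of_mem (hE : E ∈ 𝒞) : RwSimulatedBy 𝒞 E :=
  fun _ _ _ _ _ hEq hrepl => .single ⟨E, _, _, _, hE, hEq, hrepl⟩

theorem of_rwStepWith (hsim : RwSimulatedBy 𝒞 E) (hstep : RwStepWith 𝒞 E E') :
    RwSimulatedBy 𝒞 E' := by
  intro u v θ' C D hE' hrepl
  obtain ⟨E₀, l, r, θ, hE₀, hlr, hEE'⟩ := hstep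
  rcases hEE'.isEqnOf_inv hE' with ⟨s, ⟨p, hs⟩, hE⟩ | ⟨t, ⟨p, ht⟩, hE⟩
  · obtain ⟨C₀, hCC₀, hC₀D⟩ := hrepl.factor (s.subst θ')
    have hback := (hs.subst θ').symm
    rw [Trm.subst_subst, Trm.subst_subst] at hback
    exact .head ⟨E₀, r, l, θ.comp θ', hE₀, hlr.symm, hCC₀.nest hback⟩ (hsim hE hC₀D)
  · obtain ⟨C₀, hCC₀, hC₀D⟩ := hrepl.factor (t.subst θ')
    have hforth := ht.subst θ'
    rw [Trm.subst_subst, Trm.subst_subst] at hforth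
    exact (hsim hE hCC₀).tail ⟨E₀, l, r, θ.comp θ', hE₀, hlr, hC₀D.nest hforth⟩

theorem of_reflTransGen {E₁ : Clause V F} (hE₁ : E₁ ∈ 𝒞)
    (h : Relation.ReflTransGen (RwStepWith 𝒞) E₁ E) : RwSimulatedBy 𝒞 E := by
  induction h with
  | refl => exact of_mem hE₁
  | tail _ hstep ih => exact ih.of_rwStepWith hstep

end RwSimulatedBy

/-- **Linearization of rewrite derivations.**
If `D` is derivable from `𝒞` using only Rw inferences (where the equations used for
rewriting may themselves have been derived from `𝒞` by Rw inferences), then there is a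
linear derivation of `D`: a clause `C₁ ∈ 𝒞` and a sequence of single Rw steps from `C₁`
to `D`, each using a rewriting equation belonging to `𝒞`. -/
theorem linearization_of_rw_derivations {V F : Type}
    (𝒞 : Set (Clause V F)) (D : Clause V F)
    (hder : Derives (fun Ps C => RwInf Ps C) 𝒞 D) :
    ∃ C₁ ∈ 𝒞, Relation.ReflTransGen (RwStepWith 𝒞) C₁ D := by
  induction hder with
  | ax hC => exact ⟨_, hC, .refl⟩
  | inf _ hinf ih =>
      obtain ⟨C, E, l, r, θ, rfl, hE, hrepl⟩ := hinf
      obtain ⟨C₁, hC₁, hC⟩ := ih C (by simp)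
      obtain ⟨E₁, hE₁, hE₁E⟩ := ih E (by simp)
      exact ⟨C₁, hC₁, hC.trans (RwSimulatedBy.of_reflTransGen hE₁ hE₁E hE hrepl)⟩

end RewInd
end
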